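/- The set F(X, x₀) of extension-contiguity equivalence classes of face spheres in a based simplicial complex (X, x₀), with multiplication [f]·[g] = [f·g], is a group; the identity is the class of the constant face sphere at x₀, and the inverse of [f] (for f of size m×n) is the class of the face sphere f̃ defined by f̃(i,j) = f(m−i, j). -/

import Mathlib

structure ASC (V : Type) where
  faces : Set (Finset V)
  down_closed : ∀ ⦃s t : Finset V⦄, s ∈ faces → t ⊆ s → t ∈ faces

variable {U V W : Type}

/-- A vertex map is a simplicial map if it sends every simplex to a simplex. -/
def IsSimplicialMap [DecidableEq W] (K : ASC V) (L : ASC W) (f : V → W) : Prop :=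
  ∀ s ∈ K.faces, s.image f ∈ L.faces

/-- Two maps are contiguous if `f(σ) ∪ g(σ)` is a simplex for every simplex `σ`. -/
def Contiguous [DecidableEq W] (K : ASC V) (L : ASC W) (f g : V → W) : Prop :=
  ∀ s ∈ K.faces, s.image f ∪ s.image g ∈ L.faces

/-- Contiguity equivalence: a finite chain of contiguities through simplicial maps. -/
def ContigEquiv [DecidableEq W] (K : ASC V) (L : ASC W) : (V → W) → (V → W) → Prop :=
  Relation.ReflTransGen (fun a b =>
    IsSimplicialMap K L a ∧ IsSimplicialMap K L b ∧ Contiguous K L a b)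

/-- The categorical product of simplicial complexes. -/
def ASC.prod [DecidableEq V] [DecidableEq W] (K : ASC V) (L : ASC W) : ASC (V × W) where
  faces := {s | s.image Prod.fst ∈ K.faces ∧ s.image Prod.snd ∈ L.faces}
  down_closed := fun _s _t hs hts =>
    ⟨K.down_closed hs.1 (Finset.image_subset_image hts),
     L.down_closed hs.2 (Finset.image_subset_image hts)⟩

/-- The simplicial interval `I_m` on vertices `0, …, m`. -/
def interval (m : ℕ) : ASC ℕ where
  faces := {s | (∀ x ∈ s, x ≤ m) ∧ ∀ x ∈ s, ∀ y ∈ s, x ≤ y + 1}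
  down_closed := fun _s _t hs hts =>
    ⟨fun x hx => hs.1 x (hts hx), fun x hx y hy => hs.2 x (hts hx) y (hts hy)⟩

/-- The vertex map of `α_i : I_{m+1} → I_m`. -/
def alpha (i : ℕ) : ℕ → ℕ := fun s => if s ≤ i then s else s - 1

/-- The categorical product `I_m × I_n`. -/
def prodInterval (m n : ℕ) : ASC (ℕ × ℕ) := (interval m).prod (interval n)

/-- A face sphere: a simplicial map `(I_m × I_n, ∂(I_m × I_n)) → (X, x₀)`. -/
def IsFaceSphere [DecidableEq V] (X : ASC V) (x₀ : V) (m n : ℕ) (f : ℕ × ℕ → V) : Prop :=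
  IsSimplicialMap (prodInterval m n) X f ∧
  ∀ p : ℕ × ℕ, p.1 ≤ m → p.2 ≤ n →
    (p.1 = 0 ∨ p.1 = m ∨ p.2 = 0 ∨ p.2 = n) → f p = x₀

/-- Contiguity equivalence of face spheres, relative the boundary. -/
def FaceContigEquiv [DecidableEq V] (X : ASC V) (x₀ : V) (m n : ℕ) :
    (ℕ × ℕ → V) → (ℕ × ℕ → V) → Prop :=
  Relation.ReflTransGen (fun a b =>
    IsFaceSphere X x₀ m n a ∧ IsFaceSphere X x₀ m n b ∧
      Contiguous (prodInterval m n) X a b)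

/-- The trivial extension `f ∘ (α_m^r × α_n^s)`. -/
def trivExt (m n r s : ℕ) (f : ℕ × ℕ → V) : ℕ × ℕ → V :=
  f ∘ Prod.map ((alpha m)^[r]) ((alpha n)^[s])

/-- Extension-contiguity equivalence of face spheres of possibly different sizes. -/
def ExtContigEquiv [DecidableEq V] (X : ASC V) (x₀ : V) (m n : ℕ) (f : ℕ × ℕ → V)
    (m' n' : ℕ) (g : ℕ × ℕ → V) : Prop :=
  ∃ M N, m ≤ M ∧ m' ≤ M ∧ n ≤ N ∧ n' ≤ N ∧
    FaceContigEquiv X x₀ M N (trivExt m n (M - m) (N - n) f)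
      (trivExt m' n' (M - m') (N - n') g)

/-- The product `f · g` of face spheres: `f` in the lower-left block,
a translate of `g` in the upper-right block, basepoint elsewhere. -/
def fsMul (x₀ : V) (m n : ℕ) (f g : ℕ × ℕ → V) : ℕ × ℕ → V := fun p =>
  if p.1 ≤ m ∧ p.2 ≤ n then f p
  else if m + 1 ≤ p.1 ∧ n + 1 ≤ p.2 then g (p.1 - (m + 1), p.2 - (n + 1))
  else x₀

/-!
Every equivalence in the argument is a chain of contiguities between reparametrizations
`f ∘ Φ` of a single face sphere `f`. Since `f` is constant on the boundary, `Φ` only has to be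
simplicial into `I_m × I_n` with its boundary collapsed (`sphereComplex`); this lets the two
halves of the domain move independently once the column between them is sent into the boundary
(`seamGlue`).

Associativity holds on the nose, and `f · 1` is literally the trivial extension
`f ∘ (α_m × α_n)`. In `1 · f` the copy of `f` is shifted, `f ∘ (α_0 × α_0)`, and the
degeneracies `α_0, α_1, …, α_m` are successively contiguous. For the inverse, `f · f̃` is `f`
composed with a fold of the horizontal axis (`tentMap m m`) whose two halves use different
vertical coordinates; sliding the left half up one row at a time (`sweepPath`) makes them agree,
and lowering the fold to height `0` then lands in the boundary. The other inverse law is this one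
applied to `f̃`, whose own reflection agrees with `f` on the domain.
-/

open Finset Relation

section Complexes

variable {α β γ δ : Type} [DecidableEq β] {K : ASC α} {L : ASC β}

theorem isSimplicialMap_iff_contiguous_self {f : α → β} :
    IsSimplicialMap K L f ↔ Contiguous K L f f := by
  simp only [IsSimplicialMap, Contiguous, union_self]

theorem Contiguous.symm {f g : α → β} (h : Contiguous K L f g) : Contiguous K L g f :=
  fun s hs => union_comm (s.image f) (s.image g) ▸ h s hs

theorem Contiguous.mono_right {L' : ASC β} {f g : α → β} (h : Contiguous K L f g)
    (hL : L.faces ⊆ L'.faces) : Contiguous K L' f g :=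
  fun s hs => hL (h s hs)

theorem Contiguous.comp [DecidableEq γ] {M : ASC γ} {f : β → γ} (hf : IsSimplicialMap L M f)
    {φ ψ : α → β} (h : Contiguous K L φ ψ) : Contiguous K M (f ∘ φ) (f ∘ ψ) := by
  intro s hs
  simpa only [image_union, image_image] using hf _ (h s hs)

theorem Contiguous.prodMap [DecidableEq α] [DecidableEq γ] [DecidableEq δ] {K' : ASC γ}
    {L' : ASC δ} {φ φ' : α → γ} {ν ν' : β → δ} (hφ : Contiguous K K' φ φ')
    (hν : Contiguous L L' ν ν') :
    Contiguous (K.prod L) (K'.prod L') (Prod.map φ ν) (Prod.map φ' ν') := by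
  rintro s ⟨h₁, h₂⟩
  constructor
  · simpa only [image_union, image_image, Prod.map_fst'] using hφ _ h₁
  · simpa only [image_union, image_image, Prod.map_snd'] using hν _ h₂

end Complexes

section Intervals

variable {M N m n : ℕ}

theorem mem_prodInterval_faces {t : Finset (ℕ × ℕ)} :
    t ∈ (prodInterval m n).faces ↔
      (∀ p ∈ t, p.1 ≤ m ∧ p.2 ≤ n) ∧ ∀ p ∈ t, ∀ q ∈ t, p.1 ≤ q.1 + 1 ∧ p.2 ≤ q.2 + 1 := by
  simp only [prodInterval, ASC.prod, interval, Set.mem_ofPred_eq, forall_mem_image]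
  exact ⟨fun ⟨⟨h₁, h₂⟩, h₃, h₄⟩ => ⟨fun p hp => ⟨h₁ hp, h₃ hp⟩,
      fun p hp q hq => ⟨h₂ hp hq, h₄ hp hq⟩⟩,
    fun ⟨h₁, h₂⟩ => ⟨⟨fun p hp => (h₁ p hp).1, fun p hp q hq => (h₂ p hp q hq).1⟩,
      fun p hp => (h₁ p hp).2, fun p hp q hq => (h₂ p hp q hq).2⟩⟩

theorem image_sub_mem_prodInterval_faces {a b r s : ℕ} {t : Finset (ℕ × ℕ)}
    (ht : t ∈ (prodInterval M N).faces) (hab : ∀ q ∈ t, a ≤ q.1 ∧ b ≤ q.2) (hM : M ≤ a + r)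
    (hN : N ≤ b + s) : t.image (fun q => (q.1 - a, q.2 - b)) ∈ (prodInterval r s).faces := by
  obtain ⟨hbd, hcl⟩ := mem_prodInterval_faces.1 ht
  refine mem_prodInterval_faces.2 ⟨?_, ?_⟩ <;> simp only [forall_mem_image]
  · intro q hq
    have := hbd q hq
    omega
  · intro q hq q' hq'
    have := hcl q hq q' hq'
    have := hab q hq
    have := hab q' hq'
    omega

theorem Contiguous.le_of_interval {φ ψ : ℕ → ℕ} (h : Contiguous (interval N) (interval n) φ ψ)
    {i : ℕ} (hi : i ≤ N) : φ i ≤ n ∧ ψ i ≤ n := by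
  have := (h {i} ⟨by simpa using hi, by simp⟩).1
  simp_all

theorem contiguous_interval_of_adjacent {φ ψ : ℕ → ℕ}
    (h : ∀ i ≤ N, ∀ j ≤ N, i ≤ j + 1 → j ≤ i + 1 → φ i ≤ n ∧ ψ i ≤ n ∧
      φ i ≤ φ j + 1 ∧ φ i ≤ ψ j + 1 ∧ ψ i ≤ φ j + 1 ∧ ψ i ≤ ψ j + 1) :
    Contiguous (interval N) (interval n) φ ψ := by
  rintro s ⟨hs, hs'⟩
  refine ⟨?_, ?_⟩
  · simp only [mem_union, mem_image]
    rintro _ (⟨i, hi, rfl⟩ | ⟨i, hi, rfl⟩) <;>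
      have := h i (hs i hi) i (hs i hi) (by omega) (by omega) <;> omega
  · simp only [mem_union, mem_image]
    rintro _ (⟨i, hi, rfl⟩ | ⟨i, hi, rfl⟩) _ (⟨j, hj, rfl⟩ | ⟨j, hj, rfl⟩) <;>
      have := h i (hs i hi) j (hs j hj) (hs' i hi j hj) (hs' j hj i hi) <;> omega

def IsIntervalMap (N n : ℕ) (φ : ℕ → ℕ) : Prop :=
  IsSimplicialMap (interval N) (interval n) φ ∧ (φ 0 = 0 ∨ φ 0 = n) ∧ (φ N = 0 ∨ φ N = n)

theorem isIntervalMap_of_adjacent {φ : ℕ → ℕ}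
    (h : ∀ i ≤ N, ∀ j ≤ N, i ≤ j + 1 → j ≤ i + 1 → φ i ≤ n ∧ φ i ≤ φ j + 1)
    (h₀ : φ 0 = 0 ∨ φ 0 = n) (hN : φ N = 0 ∨ φ N = n) : IsIntervalMap N n φ :=
  ⟨isSimplicialMap_iff_contiguous_self.2 <| contiguous_interval_of_adjacent fun i hi j hj h₁ h₂ =>
    by have := h i hi j hj h₁ h₂; omega, h₀, hN⟩

def IntervalContigEquiv (N n : ℕ) : (ℕ → ℕ) → (ℕ → ℕ) → Prop :=
  ReflTransGen fun φ ψ =>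
    IsIntervalMap N n φ ∧ IsIntervalMap N n ψ ∧ Contiguous (interval N) (interval n) φ ψ

theorem IntervalContigEquiv.of_succ {K : ℕ} (F : ℕ → ℕ → ℕ)
    (hF : ∀ k ≤ K, IsIntervalMap N n (F k))
    (hc : ∀ k < K, Contiguous (interval N) (interval n) (F k) (F (k + 1))) :
    IntervalContigEquiv N n (F 0) (F K) := by
  induction K with
  | zero => exact .refl
  | succ K ih =>
    exact ReflTransGen.tail (ih (fun k hk => hF k (by omega)) fun k hk => hc k (by omega))
      ⟨hF K (by omega), hF (K + 1) le_rfl, hc K (by omega)⟩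

theorem isIntervalMap_id : IsIntervalMap n n id :=
  isIntervalMap_of_adjacent (fun _ hi _ _ h _ => ⟨hi, h⟩) (.inl rfl) (.inr rfl)

theorem isIntervalMap_reflect : IsIntervalMap n n (n - ·) :=
  isIntervalMap_of_adjacent (fun _ _ _ _ _ _ => by omega) (.inr (by omega)) (.inl (by omega))

theorem isIntervalMap_alpha {k : ℕ} (hk : k ≤ m) : IsIntervalMap (m + 1) m (alpha k) :=
  isIntervalMap_of_adjacent (fun _ _ _ _ _ _ => by simp only [alpha]; split_ifs <;> omega)
    (.inl (by simp [alpha])) (.inr (by simp only [alpha]; split_ifs <;> omega))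

theorem intervalContigEquiv_alpha (m : ℕ) : IntervalContigEquiv (m + 1) m (alpha 0) (alpha m) :=
  .of_succ alpha (fun _ hk => isIntervalMap_alpha hk) fun _ _ =>
    contiguous_interval_of_adjacent fun _ _ _ _ _ _ => by simp only [alpha]; split_ifs <;> omega

def tentMap (m c : ℕ) : ℕ → ℕ := fun i => min c (min i (m + m + 1 - i))

theorem isIntervalMap_tentMap {c : ℕ} (hc : c ≤ m) : IsIntervalMap (m + m + 1) m (tentMap m c) :=
  isIntervalMap_of_adjacent (fun _ _ _ _ _ _ => by simp only [tentMap]; omega)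
    (.inl (by simp [tentMap])) (.inl (by simp [tentMap]))

theorem intervalContigEquiv_tentMap (m : ℕ) :
    IntervalContigEquiv (m + m + 1) m (tentMap m 0) (tentMap m m) :=
  .of_succ (tentMap m) (fun _ hc => isIntervalMap_tentMap hc) fun _ _ =>
    contiguous_interval_of_adjacent fun _ _ _ _ _ _ => by simp only [tentMap]; omega

def sweepPath (n c : ℕ) : ℕ → ℕ := fun j => max (min j c) (j - (n + 1))

theorem isIntervalMap_sweepPath {c : ℕ} (hc : c ≤ n) :
    IsIntervalMap (n + n + 1) n (sweepPath n c) :=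
  isIntervalMap_of_adjacent (fun _ _ _ _ _ _ => by simp only [sweepPath]; omega)
    (.inl (by simp [sweepPath])) (.inr (by simp only [sweepPath]; omega))

theorem intervalContigEquiv_sweepPath (n : ℕ) :
    IntervalContigEquiv (n + n + 1) n (sweepPath n 0) (sweepPath n n) :=
  .of_succ (sweepPath n) (fun _ hc => isIntervalMap_sweepPath hc) fun _ _ =>
    contiguous_interval_of_adjacent fun _ _ _ _ _ _ => by simp only [sweepPath]; omega

end Intervals

section Spheres

variable {M N m n : ℕ}

def boxBoundary (m n : ℕ) : Set (ℕ × ℕ) :=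
  {p | p.1 ≤ m ∧ p.2 ≤ n ∧ (p.1 = 0 ∨ p.1 = m ∨ p.2 = 0 ∨ p.2 = n)}

def sphereComplex (m n : ℕ) : ASC (ℕ × ℕ) where
  faces := {t | t ∈ (prodInterval m n).faces ∨ ↑t ⊆ boxBoundary m n}
  down_closed := fun _ _ ht hst =>
    ht.imp (fun h => (prodInterval m n).down_closed h hst) (coe_subset.2 hst).trans

def IsSphereMap (M N m n : ℕ) (Φ : ℕ × ℕ → ℕ × ℕ) : Prop :=
  IsSimplicialMap (prodInterval M N) (sphereComplex m n) Φ ∧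
    Set.MapsTo Φ (boxBoundary M N) (boxBoundary m n)

def SphereContigEquiv (M N m n : ℕ) : (ℕ × ℕ → ℕ × ℕ) → (ℕ × ℕ → ℕ × ℕ) → Prop :=
  ReflTransGen fun Φ Ψ => IsSphereMap M N m n Φ ∧ IsSphereMap M N m n Ψ ∧
    Contiguous (prodInterval M N) (sphereComplex m n) Φ Ψ

theorem prodInterval_faces_subset : (prodInterval m n).faces ⊆ (sphereComplex m n).faces :=
  fun _ => .inl

theorem IsSphereMap.prodMap {φ ν : ℕ → ℕ} (hφ : IsIntervalMap M m φ) (hν : IsIntervalMap N n ν) :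
    IsSphereMap M N m n (Prod.map φ ν) := by
  refine ⟨isSimplicialMap_iff_contiguous_self.2 <|
    (Contiguous.prodMap (isSimplicialMap_iff_contiguous_self.1 hφ.1)
      (isSimplicialMap_iff_contiguous_self.1 hν.1)).mono_right prodInterval_faces_subset, ?_⟩
  rintro ⟨i, j⟩ ⟨hi, hj, hb⟩
  have hφi := (isSimplicialMap_iff_contiguous_self.1 hφ.1).le_of_interval (i := i) hi
  have hνj := (isSimplicialMap_iff_contiguous_self.1 hν.1).le_of_interval (i := j) hj
  obtain ⟨hφ₀, hφM⟩ := hφ.2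
  obtain ⟨hν₀, hνN⟩ := hν.2
  simp only [boxBoundary, Set.mem_ofPred_eq, Prod.map_apply] at hb ⊢
  rcases hb with rfl | rfl | rfl | rfl <;> omega

def seamGlue (a : ℕ) (φ νL νR : ℕ → ℕ) : ℕ × ℕ → ℕ × ℕ :=
  fun p => (φ p.1, if p.1 ≤ a then νL p.2 else νR p.2)

theorem seamGlue_self (a : ℕ) (φ ν : ℕ → ℕ) : seamGlue a φ ν ν = Prod.map φ ν := by
  funext p
  simp only [seamGlue, ite_self]
  rfl

theorem image_seamGlue_subset_boxBoundary {a : ℕ} {φ νL νR : ℕ → ℕ} {s : Finset (ℕ × ℕ)}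
    (hs : ∀ p ∈ s, (p.1 = a ∨ p.1 = a + 1) ∧ p.2 ≤ N) (ha : φ (a + 1) = φ a)
    (ha' : φ a = 0 ∨ φ a = m) (hL : ∀ j ≤ N, νL j ≤ n) (hR : ∀ j ≤ N, νR j ≤ n) :
    ↑(s.image (seamGlue a φ νL νR)) ⊆ boxBoundary m n := by
  rw [coe_image, Set.image_subset_iff]
  intro p hp
  obtain ⟨hp₁, hp₂⟩ := hs p hp
  have hφp : φ p.1 = φ a := by
    rcases hp₁ with h | h
    · rw [h]
    · rw [h, ha]
  have := hL _ hp₂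
  have := hR _ hp₂
  simp only [Set.mem_preimage, seamGlue, boxBoundary, Set.mem_ofPred_eq, hφp]
  split_ifs <;> omega

theorem contiguous_seamGlue {a : ℕ} {φ νL νL' νR νR' : ℕ → ℕ}
    (hφ : IsSimplicialMap (interval M) (interval m) φ) (ha : φ (a + 1) = φ a)
    (ha' : φ a = 0 ∨ φ a = m) (hL : Contiguous (interval N) (interval n) νL νL')
    (hR : Contiguous (interval N) (interval n) νR νR') :
    Contiguous (prodInterval M N) (sphereComplex m n) (seamGlue a φ νL νR)
      (seamGlue a φ νL' νR') := by
  have hφ' := isSimplicialMap_iff_contiguous_self.1 hφ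
  intro s hs
  by_cases hleft : ∀ p ∈ s, p.1 ≤ a
  · have e : ∀ ν ν', s.image (seamGlue a φ ν ν') = s.image (Prod.map φ ν) :=
      fun ν ν' => image_congr fun p hp => by simp only [seamGlue, if_pos (hleft p hp)]; rfl
    rw [e, e]
    exact .inl (hφ'.prodMap hL s hs)
  by_cases hright : ∀ p ∈ s, a < p.1
  · have e : ∀ ν ν', s.image (seamGlue a φ ν ν') = s.image (Prod.map φ ν') :=
      fun ν ν' => image_congr fun p hp => by simp only [seamGlue, if_neg (hright p hp).not_ge]; rfl
    rw [e, e]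
    exact .inl (hφ'.prodMap hR s hs)
  push Not at hleft hright
  obtain ⟨p, hp, hpa⟩ := hleft
  obtain ⟨q, hq, hqa⟩ := hright
  obtain ⟨hbd, hcl⟩ := mem_prodInterval_faces.1 hs
  have hseam : ∀ x ∈ s, (x.1 = a ∨ x.1 = a + 1) ∧ x.2 ≤ N := fun x hx => by
    have := hcl x hx q hq
    have := hcl p hp x hx
    have := hbd x hx
    omega
  refine .inr ?_
  rw [coe_union]
  exact Set.union_subset
    (image_seamGlue_subset_boxBoundary hseam ha ha' (fun j hj => (hL.le_of_interval hj).1)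
      fun j hj => (hR.le_of_interval hj).1)
    (image_seamGlue_subset_boxBoundary hseam ha ha' (fun j hj => (hL.le_of_interval hj).2)
      fun j hj => (hR.le_of_interval hj).2)

theorem IsSphereMap.seamGlue {a : ℕ} {φ νL νR : ℕ → ℕ} (hφ : IsIntervalMap M m φ)
    (ha : φ (a + 1) = φ a) (ha' : φ a = 0 ∨ φ a = m) (hL : IsIntervalMap N n νL)
    (hR : IsIntervalMap N n νR) : IsSphereMap M N m n (seamGlue a φ νL νR) := by
  refine ⟨isSimplicialMap_iff_contiguous_self.2 <| contiguous_seamGlue hφ.1 ha ha'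
    (isSimplicialMap_iff_contiguous_self.1 hL.1) (isSimplicialMap_iff_contiguous_self.1 hR.1),
    fun p hp => ?_⟩
  by_cases h : p.1 ≤ a
  · simp only [_root_.seamGlue, if_pos h]
    exact (IsSphereMap.prodMap hφ hL).2 hp
  · simp only [_root_.seamGlue, if_neg h]
    exact (IsSphereMap.prodMap hφ hR).2 hp

theorem SphereContigEquiv.prodMap {φ φ' ν ν' : ℕ → ℕ} (hφ : IntervalContigEquiv M m φ φ')
    (hν : IntervalContigEquiv N n ν ν') (hφ' : IsIntervalMap M m φ')
    (hν₀ : IsIntervalMap N n ν) :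
    SphereContigEquiv M N m n (Prod.map φ ν) (Prod.map φ' ν') := by
  have step {φ₁ φ₂ ν₁ ν₂ : ℕ → ℕ} (hφ₁ : IsIntervalMap M m φ₁) (hφ₂ : IsIntervalMap M m φ₂)
      (hν₁ : IsIntervalMap N n ν₁) (hν₂ : IsIntervalMap N n ν₂)
      (hφc : Contiguous (interval M) (interval m) φ₁ φ₂)
      (hνc : Contiguous (interval N) (interval n) ν₁ ν₂) :
      IsSphereMap M N m n (Prod.map φ₁ ν₁) ∧ IsSphereMap M N m n (Prod.map φ₂ ν₂) ∧
        Contiguous (prodInterval M N) (sphereComplex m n) (Prod.map φ₁ ν₁) (Prod.map φ₂ ν₂) :=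
    ⟨.prodMap hφ₁ hν₁, .prodMap hφ₂ hν₂, (hφc.prodMap hνc).mono_right prodInterval_faces_subset⟩
  exact (ReflTransGen.lift (fun φ => Prod.map φ ν) (fun _ _ ⟨h₁, h₂, hc⟩ =>
      step h₁ h₂ hν₀ hν₀ hc (isSimplicialMap_iff_contiguous_self.1 hν₀.1)) _ _ hφ).trans
    (ReflTransGen.lift (fun ν => Prod.map φ' ν) (fun _ _ ⟨h₁, h₂, hc⟩ =>
      step hφ' hφ' h₁ h₂ (isSimplicialMap_iff_contiguous_self.1 hφ'.1) hc) _ _ hν)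

theorem SphereContigEquiv.seamGlue {a : ℕ} {φ νL νL' νR : ℕ → ℕ}
    (hνL : IntervalContigEquiv N n νL νL') (hφ : IsIntervalMap M m φ)
    (ha : φ (a + 1) = φ a) (ha' : φ a = 0 ∨ φ a = m) (hR : IsIntervalMap N n νR) :
    SphereContigEquiv M N m n (seamGlue a φ νL νR) (seamGlue a φ νL' νR) :=
  ReflTransGen.lift (fun ν => _root_.seamGlue a φ ν νR) (fun _ _ ⟨h₁, h₂, hc⟩ =>
    ⟨.seamGlue hφ ha ha' h₁ hR, .seamGlue hφ ha ha' h₂ hR, contiguous_seamGlue hφ.1 ha ha' hc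
      (isSimplicialMap_iff_contiguous_self.1 hR.1)⟩) _ _ hνL

end Spheres

section FaceSpheres

variable {x₀ : V} {M N m n r s : ℕ} {f g : ℕ × ℕ → V}

theorem fsMul_apply_of_le {p : ℕ × ℕ} (h₁ : p.1 ≤ m) (h₂ : p.2 ≤ n) :
    fsMul x₀ m n f g p = f p :=
  if_pos ⟨h₁, h₂⟩

theorem fsMul_apply_of_ge {p : ℕ × ℕ} (h₁ : m + 1 ≤ p.1) (h₂ : n + 1 ≤ p.2) :
    fsMul x₀ m n f g p = g (p.1 - (m + 1), p.2 - (n + 1)) := by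
  simp only [fsMul]
  rw [if_neg (by omega), if_pos ⟨h₁, h₂⟩]

variable [DecidableEq V] {X : ASC V}

theorem IsFaceSphere.apply_eq_of_mem_boxBoundary (hf : IsFaceSphere X x₀ m n f) {p : ℕ × ℕ}
    (hp : p ∈ boxBoundary m n) : f p = x₀ :=
  hf.2 p hp.1 hp.2.1 hp.2.2

theorem IsFaceSphere.mem_faces_of_subset_singleton (hf : IsFaceSphere X x₀ m n f)
    {t : Finset V} (ht : t ⊆ {x₀}) : t ∈ X.faces := by
  refine X.down_closed ?_ ht
  have := hf.1 {(0, 0)} (mem_prodInterval_faces.2 ⟨by simp, by simp⟩)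
  rwa [image_singleton, hf.2 (0, 0) (Nat.zero_le _) (Nat.zero_le _) (.inl rfl)] at this

theorem IsFaceSphere.isSimplicialMap_sphereComplex (hf : IsFaceSphere X x₀ m n f) :
    IsSimplicialMap (sphereComplex m n) X f := by
  rintro t (ht | ht)
  · exact hf.1 t ht
  · refine hf.mem_faces_of_subset_singleton fun y hy => ?_
    obtain ⟨p, hp, rfl⟩ := mem_image.1 hy
    rw [hf.apply_eq_of_mem_boxBoundary (ht hp), mem_singleton]

theorem IsFaceSphere.comp (hf : IsFaceSphere X x₀ m n f) {Φ : ℕ × ℕ → ℕ × ℕ}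
    (hΦ : IsSphereMap M N m n Φ) : IsFaceSphere X x₀ M N (f ∘ Φ) :=
  ⟨isSimplicialMap_iff_contiguous_self.2 <|
      (isSimplicialMap_iff_contiguous_self.1 hΦ.1).comp hf.isSimplicialMap_sphereComplex,
    fun _ h₁ h₂ hb => hf.apply_eq_of_mem_boxBoundary (hΦ.2 ⟨h₁, h₂, hb⟩)⟩

theorem IsFaceSphere.reflect (hf : IsFaceSphere X x₀ m n f) :
    IsFaceSphere X x₀ m n fun p => f (m - p.1, p.2) :=
  hf.comp (.prodMap isIntervalMap_reflect isIntervalMap_id)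

theorem FaceContigEquiv.trans {A B C : ℕ × ℕ → V} (h₁ : FaceContigEquiv X x₀ M N A B)
    (h₂ : FaceContigEquiv X x₀ M N B C) : FaceContigEquiv X x₀ M N A C :=
  ReflTransGen.trans h₁ h₂

theorem FaceContigEquiv.symm {A B : ℕ × ℕ → V} (h : FaceContigEquiv X x₀ M N A B) :
    FaceContigEquiv X x₀ M N B A :=
  ReflTransGen.mono (fun _ _ ⟨hA, hB, hc⟩ => ⟨hB, hA, hc.symm⟩) _ _ (ReflTransGen.swap _ _ h)

theorem FaceContigEquiv.of_eqOn {A B : ℕ × ℕ → V} (hA : IsFaceSphere X x₀ M N A)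
    (h : ∀ p : ℕ × ℕ, p.1 ≤ M → p.2 ≤ N → A p = B p) : FaceContigEquiv X x₀ M N A B := by
  have himage : ∀ t ∈ (prodInterval M N).faces, t.image A = t.image B := fun t ht =>
    image_congr fun p hp => h p ((mem_prodInterval_faces.1 ht).1 p hp).1
      ((mem_prodInterval_faces.1 ht).1 p hp).2
  have hB : IsFaceSphere X x₀ M N B :=
    ⟨fun t ht => himage t ht ▸ hA.1 t ht, fun p h₁ h₂ hb => h p h₁ h₂ ▸ hA.2 p h₁ h₂ hb⟩
  exact .single ⟨hA, hB, fun t ht => by rw [← himage t ht, union_self]; exact hA.1 t ht⟩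

theorem FaceContigEquiv.comp (hf : IsFaceSphere X x₀ m n f) {Φ Ψ : ℕ × ℕ → ℕ × ℕ}
    (h : SphereContigEquiv M N m n Φ Ψ) : FaceContigEquiv X x₀ M N (f ∘ Φ) (f ∘ Ψ) :=
  ReflTransGen.lift (f ∘ ·) (fun _ _ ⟨hΦ, hΨ, hc⟩ =>
    ⟨hf.comp hΦ, hf.comp hΨ, hc.comp hf.isSimplicialMap_sphereComplex⟩) _ _ h

theorem IsFaceSphere.fsMul_apply_of_not_interior (hf : IsFaceSphere X x₀ m n f)
    (hg : IsFaceSphere X x₀ r s g) {p : ℕ × ℕ} (h₁ : p.1 ≤ m + r + 1) (h₂ : p.2 ≤ n + s + 1)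
    (hf' : ¬(0 < p.1 ∧ p.1 < m ∧ 0 < p.2 ∧ p.2 < n))
    (hg' : ¬(m + 1 < p.1 ∧ p.1 < m + r + 1 ∧ n + 1 < p.2 ∧ p.2 < n + s + 1)) :
    fsMul x₀ m n f g p = x₀ := by
  simp only [fsMul]
  split_ifs with hl hr
  · exact hf.2 p hl.1 hl.2 (by omega)
  · exact hg.2 _ (by omega) (by omega) (by omega)
  · rfl

theorem IsFaceSphere.fsMul (hf : IsFaceSphere X x₀ m n f) (hg : IsFaceSphere X x₀ r s g) :
    IsFaceSphere X x₀ (m + r + 1) (n + s + 1) (fsMul x₀ m n f g) := by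
  refine ⟨fun t ht => ?_, fun p h₁ h₂ hb =>
    hf.fsMul_apply_of_not_interior hg h₁ h₂ (by omega) (by omega)⟩
  obtain ⟨hbd, hcl⟩ := mem_prodInterval_faces.1 ht
  by_cases hL : ∃ p ∈ t, p.1 < m ∧ p.2 < n
  · obtain ⟨p, hp, hp₁, hp₂⟩ := hL
    have hsub : ∀ q ∈ t, q.1 ≤ m ∧ q.2 ≤ n := fun q hq => by have := hcl q hq p hp; omega
    rw [image_congr fun q hq => fsMul_apply_of_le (hsub q hq).1 (hsub q hq).2]
    exact hf.1 t (mem_prodInterval_faces.2 ⟨hsub, hcl⟩)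
  by_cases hR : ∃ p ∈ t, m + 1 < p.1 ∧ n + 1 < p.2
  · obtain ⟨p, hp, hp₁, hp₂⟩ := hR
    have hsub : ∀ q ∈ t, m + 1 ≤ q.1 ∧ n + 1 ≤ q.2 := fun q hq => by
      have := hcl p hp q hq; omega
    rw [image_congr fun q hq => fsMul_apply_of_ge (hsub q hq).1 (hsub q hq).2]
    simpa only [image_image, Function.comp_def] using
      hg.1 _ (image_sub_mem_prodInterval_faces ht hsub (by omega) (by omega))
  push Not at hL hR
  refine hf.mem_faces_of_subset_singleton fun y hy => ?_
  obtain ⟨q, hq, rfl⟩ := mem_image.1 hy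
  have := hL q hq
  have := hR q hq
  rw [hf.fsMul_apply_of_not_interior hg (hbd q hq).1 (hbd q hq).2 (by omega) (by omega),
    mem_singleton]

end FaceSpheres

section GroupLaws

variable [DecidableEq V] {X : ASC V} {x₀ : V} {m n : ℕ} {f : ℕ × ℕ → V}

theorem ExtContigEquiv.of_le {m' n' : ℕ} {g : ℕ × ℕ → V} (hm : m' ≤ m) (hn : n' ≤ n)
    (h : FaceContigEquiv X x₀ m n f (trivExt m' n' (m - m') (n - n') g)) :
    ExtContigEquiv X x₀ m n f m' n' g :=
  ⟨m, n, le_rfl, hm, le_rfl, hn, by rw [Nat.sub_self, Nat.sub_self]; exact h⟩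

theorem ExtContigEquiv.of_eq {m' n' : ℕ} {g : ℕ × ℕ → V} (hm : m = m') (hn : n = n')
    (h : f = g) : ExtContigEquiv X x₀ m n f m' n' g := by
  subst hm hn h
  exact .of_le le_rfl le_rfl (by rw [Nat.sub_self, Nat.sub_self]; exact .refl)

theorem fsMul_assoc (x₀ : V) (m n r s : ℕ) (f g h : ℕ × ℕ → V) :
    fsMul x₀ (m + r + 1) (n + s + 1) (fsMul x₀ m n f g) h =
      fsMul x₀ m n f (fsMul x₀ r s g h) := by
  funext ⟨i, j⟩
  simp only [fsMul]
  split_ifs <;> first | rfl | omega | (congr 1; rw [Prod.mk.injEq]; omega)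

theorem faceContigEquiv_fsMul_const (hf : IsFaceSphere X x₀ m n f) :
    FaceContigEquiv X x₀ (m + 1) (n + 1) (fsMul x₀ m n f fun _ => x₀) (trivExt m n 1 1 f) := by
  refine (FaceContigEquiv.of_eqOn
    (hf.comp (.prodMap (isIntervalMap_alpha le_rfl) (isIntervalMap_alpha le_rfl))) ?_).symm
  rintro ⟨i, j⟩ hi hj
  simp only [Function.comp_apply, Prod.map_apply, fsMul, alpha]
  split_ifs <;> first | rfl | (exfalso; omega) | exact hf.2 _ (by omega) (by omega) (by omega)

theorem faceContigEquiv_const_fsMul (hf : IsFaceSphere X x₀ m n f) :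
    FaceContigEquiv X x₀ (m + 1) (n + 1) (fsMul x₀ 0 0 (fun _ => x₀) f) (trivExt m n 1 1 f) := by
  have hshift := hf.comp
    (.prodMap (isIntervalMap_alpha (Nat.zero_le m)) (isIntervalMap_alpha (Nat.zero_le n)))
  refine (FaceContigEquiv.of_eqOn hshift ?_).symm.trans (FaceContigEquiv.comp hf <|
    .prodMap (intervalContigEquiv_alpha m) (intervalContigEquiv_alpha n)
      (isIntervalMap_alpha le_rfl) (isIntervalMap_alpha (Nat.zero_le n)))
  rintro ⟨i, j⟩ hi hj
  simp only [Function.comp_apply, Prod.map_apply, fsMul, alpha]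
  split_ifs <;> first | rfl | (exfalso; omega) | exact hf.2 _ (by omega) (by omega) (by omega)

theorem faceContigEquiv_fsMul_reflect (hf : IsFaceSphere X x₀ m n f) :
    FaceContigEquiv X x₀ (m + m + 1) (n + n + 1) (fsMul x₀ m n f fun p => f (m - p.1, p.2))
      fun _ => x₀ := by
  have hseam : tentMap m m (m + 1) = tentMap m m m := by simp only [tentMap]; omega
  have hseam' : tentMap m m m = 0 ∨ tentMap m m m = m := by simp only [tentMap]; omega
  have hsweep := FaceContigEquiv.comp hf <| .seamGlue (intervalContigEquiv_sweepPath n)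
    (isIntervalMap_tentMap le_rfl) hseam hseam' (isIntervalMap_sweepPath (Nat.zero_le n))
  rw [seamGlue_self] at hsweep
  have hfold := FaceContigEquiv.comp hf <| .prodMap (intervalContigEquiv_tentMap m) .refl
    (isIntervalMap_tentMap le_rfl) (isIntervalMap_sweepPath (Nat.zero_le n))
  have hstart : FaceContigEquiv X x₀ (m + m + 1) (n + n + 1)
      (f ∘ seamGlue m (tentMap m m) (sweepPath n n) (sweepPath n 0))
      (fsMul x₀ m n f fun p => f (m - p.1, p.2)) := by
    refine .of_eqOn (hf.comp (.seamGlue (isIntervalMap_tentMap le_rfl) hseam hseam'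
      (isIntervalMap_sweepPath le_rfl) (isIntervalMap_sweepPath (Nat.zero_le n)))) ?_
    rintro ⟨i, j⟩ hi hj
    simp only [Function.comp_apply, seamGlue, tentMap, sweepPath, fsMul]
    split_ifs <;> first
      | rfl
      | (exfalso; omega)
      | (congr 1; rw [Prod.mk.injEq]; omega)
      | exact hf.2 _ (by omega) (by omega) (by omega)
  have hend : FaceContigEquiv X x₀ (m + m + 1) (n + n + 1)
      (f ∘ Prod.map (tentMap m 0) (sweepPath n 0)) fun _ => x₀ := by
    refine .of_eqOn (hf.comp (.prodMap (isIntervalMap_tentMap (Nat.zero_le m))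
      (isIntervalMap_sweepPath (Nat.zero_le n)))) ?_
    rintro ⟨i, j⟩ hi hj
    simp only [Function.comp_apply, Prod.map_apply, tentMap, sweepPath]
    exact hf.2 _ (by omega) (by omega) (by omega)
  exact (hend.symm.trans (hfold.trans (hsweep.trans hstart))).symm

theorem faceContigEquiv_reflect_fsMul (hf : IsFaceSphere X x₀ m n f) :
    FaceContigEquiv X x₀ (m + m + 1) (n + n + 1) (fsMul x₀ m n (fun p => f (m - p.1, p.2)) f)
      fun _ => x₀ := by
  refine .trans (.of_eqOn (hf.reflect.fsMul hf) ?_) (faceContigEquiv_fsMul_reflect hf.reflect)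
  rintro ⟨i, j⟩ hi hj
  simp only [fsMul]
  split_ifs <;> first | rfl | (congr 1; rw [Prod.mk.injEq]; omega)

end GroupLaws

/-- `F(X, x₀)` is a group: the product of face spheres is a face
sphere, it is associative up to extension-contiguity equivalence, the constant
face sphere is a two-sided identity, and `f̃(i,j) = f(m−i, j)` is a two-sided
inverse for `f`. -/
theorem faceGroup_group {V : Type} [DecidableEq V] (X : ASC V) (x₀ : V) :
    -- closure
    (∀ (m n r s : ℕ) (f g : ℕ × ℕ → V), IsFaceSphere X x₀ m n f →
      IsFaceSphere X x₀ r s g →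
      IsFaceSphere X x₀ (m + r + 1) (n + s + 1) (fsMul x₀ m n f g)) ∧
    -- associativity
    (∀ (m n r s t u : ℕ) (f g h : ℕ × ℕ → V), IsFaceSphere X x₀ m n f →
      IsFaceSphere X x₀ r s g → IsFaceSphere X x₀ t u h →
      ExtContigEquiv X x₀ (m + r + 1 + t + 1) (n + s + 1 + u + 1)
        (fsMul x₀ (m + r + 1) (n + s + 1) (fsMul x₀ m n f g) h)
        (m + (r + t + 1) + 1) (n + (s + u + 1) + 1)
        (fsMul x₀ m n f (fsMul x₀ r s g h))) ∧
    -- the class of the constant face sphere is a two-sided identity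
    (∀ (m n : ℕ) (f : ℕ × ℕ → V), IsFaceSphere X x₀ m n f →
      ExtContigEquiv X x₀ (m + 0 + 1) (n + 0 + 1)
        (fsMul x₀ m n f (fun _ => x₀)) m n f ∧
      ExtContigEquiv X x₀ (0 + m + 1) (0 + n + 1)
        (fsMul x₀ 0 0 (fun _ => x₀) f) m n f) ∧
    -- `f̃` is a face sphere and a two-sided inverse for `f`
    (∀ (m n : ℕ) (f : ℕ × ℕ → V), IsFaceSphere X x₀ m n f →
      IsFaceSphere X x₀ m n (fun p => f (m - p.1, p.2)) ∧
      ExtContigEquiv X x₀ (m + m + 1) (n + n + 1)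
        (fsMul x₀ m n f (fun p => f (m - p.1, p.2))) 0 0 (fun _ => x₀) ∧
      ExtContigEquiv X x₀ (m + m + 1) (n + n + 1)
        (fsMul x₀ m n (fun p => f (m - p.1, p.2)) f) 0 0 (fun _ => x₀)) := by
  refine ⟨fun _ _ _ _ _ _ hf hg => hf.fsMul hg, ?_, fun m n f hf => ⟨?_, ?_⟩,
    fun m n f hf => ⟨hf.reflect, ?_, ?_⟩⟩
  · intro m n r s t u f g h _ _ _
    exact .of_eq (by omega) (by omega) (fsMul_assoc x₀ m n r s f g h)
  · exact .of_le (by omega) (by omega) (by simpa using faceContigEquiv_fsMul_const hf)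
  · exact .of_le (by omega) (by omega) (by simpa using faceContigEquiv_const_fsMul hf)
  · exact .of_le (Nat.zero_le _) (Nat.zero_le _) (faceContigEquiv_fsMul_reflect hf)
  · exact .of_le (Nat.zero_le _) (Nat.zero_le _) (faceContigEquiv_reflect_fsMul hf)
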